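/- Analytic core of Theorem 5.3 (volume part): Let k > 0, C₆ ≥ 0 and δ > 0. Let V : [0,∞) → (0,∞) be locally Lipschitz such that at almost every λ ≥ 0 at which V is differentiable, |V'(λ) − k² V(λ)| ≤ (3/2) k² C₆ e^{−(2/3)k²λ} V(λ). Then for every λ₀ ≥ 0 satisfying (9/4) C₆ e^{−(2/3)k²λ₀} ≤ log(1+δ), and every λ ≥ λ₀, one has (1+δ)^{−1} ≤ V(λ) / (V(λ₀) e^{k²(λ−λ₀)}) ≤ 1+δ. -/

import Mathlib

/-!
Pass to `log V`. On `[λ₀, λ]` the function `V` is Lipschitz and bounded below by a positive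
constant, so `log V` is Lipschitz, hence absolutely continuous, and the fundamental theorem of
calculus applies to it. Its a.e. derivative `V'/V` differs from `k²` by at most
`(3/2) k² C₆ e^{-(2/3)k²x}`, whose integral over `[λ₀, ∞)` is `(9/4) C₆ e^{-(2/3)k²λ₀}`.
Hence `|log (V λ / (V λ₀ e^{k²(λ-λ₀)}))| ≤ log (1 + δ)`.
-/

open Set MeasureTheory

open Real intervalIntegral

lemma Real.lipschitzOnWith_log_Ici {m : ℝ} (hm : 0 < m) :
    LipschitzOnWith (Real.toNNReal m⁻¹) log (Ici m) := by
  refine (convex_Ici m).lipschitzOnWith_of_nnnorm_deriv_le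
    (fun x hx => differentiableAt_log (hm.trans_le hx).ne') fun x hx => ?_
  have hx0 : 0 < x := hm.trans_le hx
  rw [← NNReal.coe_le_coe, coe_nnnorm, deriv_log, Real.norm_eq_abs, abs_inv, abs_of_pos hx0,
    Real.coe_toNNReal _ (inv_nonneg.2 hm.le)]
  exact inv_anti₀ hm hx

lemma LipschitzOnWith.exists_lipschitzOnWith_log {α : Type*} [PseudoMetricSpace α]
    {f : α → ℝ} {s : Set α} {K : NNReal} (hf : LipschitzOnWith K f s) (hs : IsCompact s)
    (hpos : ∀ x ∈ s, 0 < f x) : ∃ K', LipschitzOnWith K' (fun x => log (f x)) s := by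
  obtain ⟨m, hm, hmf⟩ := hs.exists_forall_le' hf.continuousOn hpos
  exact ⟨_, (Real.lipschitzOnWith_log_Ici hm).comp hf hmf⟩

lemma abs_deriv_log_sub_le {f : ℝ → ℝ} {x c r : ℝ} (hf : DifferentiableAt ℝ f x) (hx : 0 < f x)
    (h : |deriv f x - c * f x| ≤ r * f x) : |deriv (fun y => log (f y)) x - c| ≤ r := by
  rw [(hf.hasDerivAt.log hx.ne').deriv, div_sub' hx.ne', mul_comm (f x) c, abs_div,
    abs_of_pos hx, div_le_iff₀ hx]
  exact h

theorem abs_log_sub_log_sub_mul_le_integral {f φ : ℝ → ℝ} {a b c : ℝ} {K : NNReal}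
    (hab : a ≤ b) (hf : LipschitzOnWith K f (Icc a b)) (hpos : ∀ x ∈ Icc a b, 0 < f x)
    (hφ : IntervalIntegrable φ volume a b)
    (hderiv : ∀ᵐ x, x ∈ Ioc a b → DifferentiableAt ℝ f x →
      |deriv f x - c * f x| ≤ φ x * f x) :
    |log (f b) - log (f a) - c * (b - a)| ≤ ∫ x in a..b, φ x := by
  obtain ⟨K', hlog⟩ := hf.exists_lipschitzOnWith_log isCompact_Icc hpos
  rw [← uIcc_of_le hab] at hf hlog
  have hlogAC := hlog.absolutelyContinuousOnInterval
  have hftc : log (f b) - log (f a) - c * (b - a) =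
      ∫ x in a..b, (deriv (fun y => log (f y)) x - c) := by
    rw [integral_sub hlogAC.intervalIntegrable_deriv intervalIntegrable_const,
      hlogAC.integral_deriv_eq_sub, intervalIntegral.integral_const, smul_eq_mul, mul_comm]
  rw [hftc, ← Real.norm_eq_abs]
  refine norm_integral_le_of_norm_le hab ?_ hφ
  filter_upwards [hf.absolutelyContinuousOnInterval.ae_differentiableAt, hderiv]
    with x hfx hx hmem
  have hIcc : x ∈ Icc a b := Ioc_subset_Icc_self hmem
  have hfx := hfx (by rwa [uIcc_of_le hab])
  exact abs_deriv_log_sub_le hfx (hpos x hIcc) (hx hmem hfx)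

lemma integral_exp_mul_le_of_neg {a b c : ℝ} (hc : c < 0) :
    ∫ x in a..b, exp (c * x) ≤ exp (c * a) / -c := by
  have hderiv : ∀ x ∈ uIcc a b, HasDerivAt (fun y => exp (c * y) / c) (exp (c * x)) x := by
    intro x _
    refine (((hasDerivAt_id' x).const_mul c).exp.div_const c).congr_deriv ?_
    rw [mul_one, mul_div_assoc, div_self hc.ne, mul_one]
  rw [integral_eq_sub_of_hasDerivAt hderiv ((by fun_prop : Continuous _).intervalIntegrable _ _),
    div_neg, sub_eq_add_neg]
  exact add_le_of_nonpos_left (div_nonpos_of_nonneg_of_nonpos (exp_pos _).le hc.le)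

lemma inv_le_and_le_of_abs_log_le {x t : ℝ} (hx : 0 < x) (ht : 0 < t) (h : |log x| ≤ log t) :
    t⁻¹ ≤ x ∧ x ≤ t := by
  obtain ⟨hlo, hhi⟩ := abs_le.1 h
  refine ⟨?_, (log_le_log_iff hx ht).1 hhi⟩
  rw [← log_le_log_iff (inv_pos.2 ht) hx, log_inv]
  exact hlo

/-- Analytic core of Theorem 5.3 (volume part): if `V : [0,∞) → (0,∞)` is locally
Lipschitz and a.e. (where differentiable) satisfies
`|V' − k²V| ≤ (3/2)k²C₆ e^{−(2/3)k²λ} V`, then for every `λ₀ ≥ 0` with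
`(9/4)C₆ e^{−(2/3)k²λ₀} ≤ log(1+δ)` and every `λ ≥ λ₀`,
`(1+δ)⁻¹ ≤ V λ / (V λ₀ e^{k²(λ−λ₀)}) ≤ 1+δ`. -/
theorem volume_growth_core
    (k C₆ δ : ℝ) (hk : 0 < k) (hC₆ : 0 ≤ C₆) (hδ : 0 < δ)
    (V : ℝ → ℝ)
    (hVpos : ∀ l, 0 ≤ l → 0 < V l)
    (hVlip : ∀ x y : ℝ, 0 ≤ x → ∃ C : NNReal, LipschitzOnWith C V (Set.Icc x y))
    (hae : ∀ᵐ l ∂(volume.restrict (Set.Ici (0 : ℝ))),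
      DifferentiableAt ℝ V l →
        |deriv V l - k^2 * V l| ≤ (3/2) * k^2 * C₆ * Real.exp (-(2/3) * k^2 * l) * V l) :
    ∀ l₀ : ℝ, 0 ≤ l₀ → (9/4) * C₆ * Real.exp (-(2/3) * k^2 * l₀) ≤ Real.log (1 + δ) →
      ∀ l : ℝ, l₀ ≤ l →
        (1 + δ)⁻¹ ≤ V l / (V l₀ * Real.exp (k^2 * (l - l₀))) ∧
        V l / (V l₀ * Real.exp (k^2 * (l - l₀))) ≤ 1 + δ := by
  intro l₀ hl₀ hsmall l hl
  have hpos : ∀ x ∈ Icc l₀ l, 0 < V x := fun x hx => hVpos x (hl₀.trans hx.1)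
  obtain ⟨C, hC⟩ := hVlip l₀ l hl₀
  have hlog := abs_log_sub_log_sub_mul_le_integral hl hC hpos
    ((by fun_prop : Continuous fun x => (3/2) * k^2 * C₆ * exp (-(2/3) * k^2 * x)).intervalIntegrable
      _ _) <| by
    filter_upwards [(ae_restrict_iff' measurableSet_Ici).1 hae] with x hx hmem
    exact hx (hl₀.trans hmem.1.le)
  rw [intervalIntegral.integral_const_mul] at hlog
  have herror : (3/2) * k^2 * C₆ * ∫ x in l₀..l, exp (-(2/3) * k^2 * x) ≤
      (9/4) * C₆ * exp (-(2/3) * k^2 * l₀) := calc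
    _ ≤ (3/2) * k^2 * C₆ * (exp (-(2/3) * k^2 * l₀) / -(-(2/3) * k^2)) := by
      gcongr
      exact integral_exp_mul_le_of_neg (by nlinarith)
    _ = _ := by field_simp; ring
  have hVl₀ := hpos l₀ ⟨le_rfl, hl⟩
  have hVl := hpos l ⟨hl, le_rfl⟩
  have hratio : log (V l / (V l₀ * exp (k^2 * (l - l₀)))) =
      log (V l) - log (V l₀) - k^2 * (l - l₀) := by
    rw [log_div hVl.ne' (by positivity), log_mul hVl₀.ne' (exp_pos _).ne', log_exp]
    ring
  exact inv_le_and_le_of_abs_log_le (by positivity) (by linarith)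
    (hratio ▸ hlog.trans (herror.trans hsmall))
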